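/- arXiv:2603.26631 — 12 statements merged into one kernel-verified Lean document; each statement's English description precedes it below -/
import Mathlib

section
/- If 0 < v_L < v_H, the undisclosed-learning revenue Π¹ (equal to v_H + v_L/2 if v_L/v_H < 2/3, and 2·v_L otherwise) is at least the no-learning revenue Π⁰ (equal to v_H if v_L/v_H < 1/2, and 2·v_L otherwise), with equality iff v_L/v_H ≥ 2/3. -/
/-- The undisclosed-learning revenue `Π¹` is at least the no-learning revenue
`Π⁰`, with equality iff `vL / vH ≥ 2/3`. -/
theorem stmt1 (vL vH : ℝ) (h0 : 0 < vL) (h1 : vL < vH) :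
    let Pi0 : ℝ := if vL / vH < 1/2 then vH else 2 * vL
    let Pi1 : ℝ := if vL / vH < 2/3 then vH + vL/2 else 2 * vL
    Pi0 ≤ Pi1 ∧ (Pi1 = Pi0 ↔ 2/3 ≤ vL / vH) := by
  intro Pi0 Pi1
  have hvH : (0:ℝ) < vH := h0.trans h1
  simp only [Pi0, Pi1]
  by_cases h23 : vL / vH < 2/3
  · have h23' : 3 * vL < 2 * vH := by
      have := (div_lt_iff₀ hvH).mp h23
      linarith
    rw [if_pos h23]
    by_cases h12 : vL / vH < 1/2
    · rw [if_pos h12]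
      constructor
      · linarith
      · constructor
        · intro h; linarith
        · intro h; linarith
    · rw [if_neg h12]
      have h12' : vH ≤ 2 * vL := by
        have := (le_div_iff₀ hvH).mp (not_lt.mp h12)
        linarith
      constructor
      · linarith
      · constructor
        · intro h; linarith
        · intro h; linarith
  · have h23' : 2 * vH ≤ 3 * vL := by
      
      have := (le_div_iff₀ hvH).mp (not_lt.mp h23)
      linarith
    have h12 : ¬ vL / vH < 1/2 := by
      intro h
      have := (div_lt_iff₀ hvH).mp h
      linarith
    rw [if_neg h23, if_neg h12]
    exact ⟨le_refl _, by simp [not_lt.mp h23]⟩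
end

section
/- Define the relative revenue gain g(v_L, v_H) = (Π¹ − Π⁰)/Π⁰ where Π⁰ = v_H if v_L < v_H/2 else 2·v_L, and Π¹ = v_H + v_L/2 if v_L < 2·v_H/3 else 2·v_L. Then for all 0 < v_L < v_H, g(v_L, v_H) ≤ 1/4, and the bound 1/4 is attained exactly when v_L = v_H/2. -/
/-- The relative revenue gain `(Π¹ − Π⁰)/Π⁰` is at most `1/4`, and the bound
`1/4` is attained exactly when `vL = vH/2`. -/
theorem stmt2 (vL vH : ℝ) (h0 : 0 < vL) (h1 : vL < vH) :
    let Pi0 : ℝ := if vL < vH / 2 then vH else 2 * vL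
    let Pi1 : ℝ := if vL < 2 * vH / 3 then vH + vL/2 else 2 * vL
    (Pi1 - Pi0) / Pi0 ≤ 1/4 ∧ ((Pi1 - Pi0) / Pi0 = 1/4 ↔ vL = vH / 2) := by
  intro Pi0 Pi1
  have hH : 0 < vH := h0.trans h1
  by_cases ha : vL < vH / 2
  · have hb : vL < 2 * vH / 3 := by linarith
    simp only [Pi0, Pi1, if_pos ha, if_pos hb]
    constructor
    · rw [div_le_iff₀ hH]; linarith
    · constructor
      · intro h
        rw [div_eq_iff hH.ne'] at h
        linarith
      · intro h; linarith
  · push_neg at ha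
    by_cases hb : vL < 2 * vH / 3
    · simp only [Pi0, Pi1, if_neg (not_lt.mpr ha), if_pos hb]
      constructor
      · rw [div_le_iff₀ (by linarith : (0:ℝ) < 2 * vL)]; linarith
      · constructor
        · intro h
          rw [div_eq_iff (by positivity : (2*vL:ℝ) ≠ 0)] at h
          linarith
        · intro h; rw [h]; field_simp; ring
    · simp only [Pi0, Pi1, if_neg (not_lt.mpr ha), if_neg hb]
      push_neg at hb
      constructor
      · simp
      · constructor
        · intro h; simp at h
        · intro h; exfalso; linarith
end

section
/- In the symmetric 2×2 manipulation game between two high-preference buyers with payoffs: (1,1) if both choose frequency 1; (l + G, 1 − l + G) if row chooses 0 and column chooses 1 (and symmetrically); (G, G) if both choose 0, where G = (v_H − v_L)/2, the unique symmetric mixed equilibrium has each player choosing 0 with probability ρ* = 1 − 2(1−l)/(v_H − v_L) whenever v_H − v_L > 2(1−l), and this ρ* lies strictly in (0,1). -/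
/-- In the symmetric 2×2 manipulation game between two high-preference buyers,
with `G = (vH − vL)/2` and `vH − vL > 2(1−l)`, the unique symmetric mixed equilibrium
(characterized by the indifference condition) has manipulation probability
`ρ* = 1 − 2(1−l)/(vH − vL) ∈ (0,1)`. -/
theorem stmt3 (vL vH l : ℝ) (h0 : 0 < vL) (h1 : vL < vH) (hl0 : 0 < l) (hl1 : l < 1)
    (hgap : 2 * (1 - l) < vH - vL) :
    let G : ℝ := (vH - vL) / 2
    let ρstar : ℝ := 1 - 2 * (1 - l) / (vH - vL)
    (0 < ρstar ∧ ρstar < 1) ∧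
    ((1 - ρstar) * 1 + ρstar * (1 - l + G) = (1 - ρstar) * (l + G) + ρstar * G) ∧
    (∀ ρ : ℝ, 0 < ρ → ρ < 1 →
      (1 - ρ) * 1 + ρ * (1 - l + G) = (1 - ρ) * (l + G) + ρ * G → ρ = ρstar) := by
  intro G ρstar
  have hd : vH - vL > 0 := by linarith
  have hdne : vH - vL ≠ 0 := ne_of_gt hd
  refine ⟨⟨?_, ?_⟩, ?_, ?_⟩
  · have : 2 * (1 - l) / (vH - vL) < 1 := (div_lt_one hd).mpr hgap
    simp only [ρstar]; linarith
  · have : 0 < 2 * (1 - l) / (vH - vL) := by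
      apply div_pos (by linarith) hd
    simp only [ρstar]; linarith
  · simp only [ρstar, G]; field_simp; ring
  · intro ρ _ _ h
    simp only [G] at h
    simp only [ρstar]
    field_simp
    nlinarith [h]
end

section
/- Suppose 2/5 < v_L/v_H < 2/3 and v_L(v_H − v_L) > 8(1−l)² with 0 < l < 1. Then the manipulation probability ρ* = 1 − √(v_L/(2(v_H − v_L))) and mixing probability β = 1/2 − √2·(1−l)/√(v_L(v_H − v_L)) satisfy: ρ* ∈ (0,1), β ∈ (0, 1/2), and the seller's indifference/consistency equations ρ* = 1 − 2(1−l)/((1−2β)(v_H − v_L)) and v_L/v_H = 2s/(1+2s) with s = (1−ρ*)² hold simultaneously. -/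
/-!
Write `d = vH − vL` and `a = √(vL / (2d)) = 1 − ρ*`. Then `√(vL d) = √2 · a · d`, so
`1 − 2β = 2(1 − l) / (a d)` and the seller's indifference equation returns `a`. Since `2s = 2a² = vL / d`,
the consistency equation is `vL / vH = (vL / d) / (1 + vL / d)`. The bounds on `ρ*` and `β` are
`vL / (2d) < 1`, i.e. `vL / vH < 2/3`, and `8(1 − l)² < vL d`.
-/

open Real

lemma one_sub_sqrt_mem_Ioo {x : ℝ} (hx0 : 0 < x) (hx1 : x < 1) :
    0 < 1 - √x ∧ 1 - √x < 1 := by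
  have : √x < 1 := (sqrt_lt' one_pos).2 (by simpa using hx1)
  exact ⟨by linarith, by linarith [sqrt_pos.2 hx0]⟩

lemma sqrt_two_mul_div_sqrt_lt_half {k p : ℝ} (hk : 0 ≤ k) (h : 8 * k ^ 2 < p) :
    √2 * k / √p < 1 / 2 := by
  have hp : 0 < √p := sqrt_pos.2 (by nlinarith)
  have h2 : √2 ^ 2 = 2 := sq_sqrt zero_le_two
  have : 2 * (√2 * k) < √p := (lt_sqrt (by positivity)).2 (by nlinarith)
  rw [div_lt_iff₀ hp]
  linarith

lemma sqrt_mul_eq_sqrt_two_mul_sqrt_div {x d : ℝ} (hx : 0 ≤ x) (hd : 0 < d) :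
    √(x * d) = √2 * √(x / (2 * d)) * d := by
  rw [← sqrt_mul zero_le_two, ← sqrt_sq hd.le, ← sqrt_mul (by positivity), sqrt_sq hd.le]
  congr 1
  field_simp

lemma sqrt_div_eq_of_half_sub {x d k : ℝ} (hx : 0 < x) (hd : 0 < d) (hk : k ≠ 0) :
    √(x / (2 * d)) = 2 * k / ((1 - 2 * (1 / 2 - √2 * k / √(x * d))) * d) := by
  have ha : 0 < √(x / (2 * d)) := sqrt_pos.2 (by positivity)
  have h2 : 0 < √2 := sqrt_pos.2 two_pos
  rw [sqrt_mul_eq_sqrt_two_mul_sqrt_div hx.le hd]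
  field_simp
  ring

lemma div_eq_two_mul_div_one_add {x y : ℝ} (hxy : x ≠ y) :
    x / y = 2 * (x / (2 * (y - x))) / (1 + 2 * (x / (2 * (y - x)))) := by
  have hd : y - x ≠ 0 := sub_ne_zero.2 hxy.symm
  rw [mul_div_left_comm, div_mul_cancel_left₀ two_ne_zero, ← div_eq_mul_inv, one_add_div hd,
    sub_add_cancel, div_div_div_cancel_right₀ hd]

theorem stmt6_general (vL vH l : ℝ) (h0 : 0 < vL) (h1 : vL < vH) (hl1 : l < 1)
    (hr2 : vL / vH < 2/3)
    (hr3 : 8 * (1 - l)^2 < vL * (vH - vL)) :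
    let ρstar : ℝ := 1 - Real.sqrt (vL / (2 * (vH - vL)))
    let β : ℝ := 1/2 - Real.sqrt 2 * (1 - l) / Real.sqrt (vL * (vH - vL))
    let s : ℝ := (1 - ρstar)^2
    (0 < ρstar ∧ ρstar < 1) ∧ (0 < β ∧ β < 1/2) ∧
    ρstar = 1 - 2 * (1 - l) / ((1 - 2*β) * (vH - vL)) ∧
    vL / vH = 2 * s / (1 + 2 * s) := by
  intro ρstar β s
  have hd : 0 < vH - vL := sub_pos.2 h1
  have hl : 0 < 1 - l := sub_pos.2 hl1
  have hlt : vL / (2 * (vH - vL)) < 1 := by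
    rw [div_lt_one (by positivity)]
    linarith [(div_lt_iff₀ (h0.trans h1)).1 hr2]
  have hpos : 0 < √2 * (1 - l) / √(vL * (vH - vL)) :=
    div_pos (mul_pos (sqrt_pos.2 two_pos) hl) (sqrt_pos.2 (mul_pos h0 hd))
  have hs : s = vL / (2 * (vH - vL)) := by
    simp only [s, ρstar, sub_sub_cancel]
    exact sq_sqrt (by positivity)
  refine ⟨one_sub_sqrt_mem_Ioo (by positivity) hlt,
    ⟨?_, by simp only [β]; linarith⟩, ?_, ?_⟩
  · simp only [β]
    linarith [sqrt_two_mul_div_sqrt_lt_half hl.le hr3]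
  · rw [← sqrt_div_eq_of_half_sub h0 hd hl.ne']
  · rw [hs]
    exact div_eq_two_mul_div_one_add h1.ne

/-- Region IV (Case 1) equilibrium: the manipulation probability
`ρ* = 1 − √(vL/(2(vH − vL)))` and the seller's mixing probability
`β = 1/2 − √2(1−l)/√(vL(vH−vL))` satisfy `ρ* ∈ (0,1)`, `β ∈ (0,1/2)`, and the
indifference/consistency equations. -/
theorem stmt6 (vL vH l : ℝ) (h0 : 0 < vL) (h1 : vL < vH) (hl0 : 0 < l) (hl1 : l < 1)
    (hr1 : 2/5 < vL / vH) (hr2 : vL / vH < 2/3)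
    (hr3 : 8 * (1 - l)^2 < vL * (vH - vL)) :
    let ρstar : ℝ := 1 - Real.sqrt (vL / (2 * (vH - vL)))
    let β : ℝ := 1/2 - Real.sqrt 2 * (1 - l) / Real.sqrt (vL * (vH - vL))
    let s : ℝ := (1 - ρstar)^2
    (0 < ρstar ∧ ρstar < 1) ∧ (0 < β ∧ β < 1/2) ∧
    ρstar = 1 - 2 * (1 - l) / ((1 - 2*β) * (vH - vL)) ∧
    vL / vH = 2 * s / (1 + 2 * s) :=
  stmt6_general vL vH l h0 h1 hl1 hr2 hr3
end

section
/- Suppose 0 < v_L/v_H < 2/5 and (v_H − v_L)(v_H − 2v_L) > 4(1−l)² with 0 < l < 1. Then ρ* = 1 − √((v_H − 2v_L)/(v_H − v_L)) and β = 2(1−l)/√((v_H − v_L)(v_H − 2v_L)) satisfy: ρ* ∈ (0,1), β ∈ (0,1), and the consistency equations ρ* = 1 − 2(1−l)/(β(v_H − v_L)) and v_L/v_H = (1−s)/(2−s) with s = (1−ρ*)² hold simultaneously. -/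
/-- Region IV (Case 2) equilibrium: `ρ* = 1 − √((vH − 2vL)/(vH − vL))` and
`β = 2(1−l)/√((vH−vL)(vH−2vL))` satisfy `ρ* ∈ (0,1)`, `β ∈ (0,1)`, and the consistency
equations. -/
theorem stmt7 (vL vH l : ℝ) (h0 : 0 < vL) (h1 : vL < vH) (hl0 : 0 < l) (hl1 : l < 1)
    (hr1 : vL / vH < 2/5)
    (hr2 : 4 * (1 - l)^2 < (vH - vL) * (vH - 2*vL)) :
    let ρstar : ℝ := 1 - Real.sqrt ((vH - 2*vL) / (vH - vL))
    let β : ℝ := 2 * (1 - l) / Real.sqrt ((vH - vL) * (vH - 2*vL))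
    let s : ℝ := (1 - ρstar)^2
    (0 < ρstar ∧ ρstar < 1) ∧ (0 < β ∧ β < 1) ∧
    ρstar = 1 - 2 * (1 - l) / (β * (vH - vL)) ∧
    vL / vH = (1 - s) / (2 - s) := by
  have hvH : 0 < vH := h0.trans h1
  have hA : 0 < vH - vL := by linarith
  have hB : 0 < vH - 2*vL := by
    have := (div_lt_iff₀ hvH).mp hr1
    nlinarith
  intro ρstar β s
  set r := Real.sqrt ((vH - 2*vL) / (vH - vL)) with hr
  have hrnn : 0 ≤ r := Real.sqrt_nonneg _
  have hrsq : r ^ 2 = (vH - 2*vL) / (vH - vL) := by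
    rw [hr, sq, Real.mul_self_sqrt (div_nonneg hB.le hA.le)]
  have hdivpos : 0 < (vH - 2*vL) / (vH - vL) := div_pos hB hA
  have hdivlt : (vH - 2*vL) / (vH - vL) < 1 := (div_lt_one hA).mpr (by linarith)
  have hrpos : 0 < r := by nlinarith
  have hrlt : r < 1 := by nlinarith
  have hkey : Real.sqrt ((vH - vL) * (vH - 2*vL)) = r * (vH - vL) := by
    rw [show (vH - vL) * (vH - 2*vL) = ((vH - 2*vL) / (vH - vL)) * (vH - vL)^2 by
      field_simp]
    rw [Real.sqrt_mul (div_nonneg hB.le hA.le), Real.sqrt_sq hA.le, hr]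
  have hβ : β = 2 * (1 - l) / (r * (vH - vL)) := by
    simp only [β, hkey]
  have hβpos : 0 < β := by
    rw [hβ]; exact div_pos (by linarith) (mul_pos hrpos hA)
  have hABsq : (r * (vH - vL))^2 = (vH - vL) * (vH - 2*vL) := by
    have : r^2 * (vH - vL)^2 = (vH - vL) * (vH - 2*vL) := by
      rw [hrsq]; field_simp
    nlinarith [this]
  have hβlt : β < 1 := by
    rw [hβ, div_lt_one (mul_pos hrpos hA)]
    nlinarith [hABsq, mul_pos hrpos hA]
  refine ⟨⟨by show (0:ℝ) < 1 - r; linarith, by show (1:ℝ) - r < 1; linarith⟩,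
    ⟨hβpos, hβlt⟩, ?_, ?_⟩
  · show 1 - r = 1 - 2 * (1 - l) / (β * (vH - vL))
    rw [hβ]
    field_simp
    rw [mul_div_assoc, div_self (by linarith : (1 - l) ≠ 0), mul_one]
  · show vL / vH = (1 - (1 - (1 - r))^2) / (2 - (1 - (1 - r))^2)
    have h2 : (1 - (1 - r))^2 = (vH - 2*vL) / (vH - vL) := by
      simpa using hrsq
    rw [h2]
    rw [div_eq_div_iff hvH.ne' (by rw [show (2:ℝ) - (vH - 2*vL)/(vH - vL) = vH/(vH - vL) by field_simp; ring]; positivity : ((2:ℝ) - (vH - 2*vL)/(vH - vL)) ≠ 0)]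
    field_simp
    ring
end

section
/- In Region IV Case 2 (v_L < 2v_H/5), the equilibrium manipulation probability ρ*(v_H, v_L) = 1 − √((v_H − 2v_L)/(v_H − v_L)) is strictly decreasing in v_H for fixed v_L, and strictly increasing in v_L for fixed v_H (on the domain 0 < v_L < v_H/2). -/
/-- On the domain `0 < vL < vH/2`, the equilibrium manipulation probability
`ρ*(vH, vL) = 1 − √((vH − 2vL)/(vH − vL))` is strictly decreasing in `vH` for fixed `vL`,
and strictly increasing in `vL` for fixed `vH`. -/
theorem stmt8 :
    (∀ vL vH₁ vH₂ : ℝ, 0 < vL → 2 * vL < vH₁ → vH₁ < vH₂ →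
      1 - Real.sqrt ((vH₂ - 2*vL)/(vH₂ - vL)) < 1 - Real.sqrt ((vH₁ - 2*vL)/(vH₁ - vL))) ∧
    (∀ vH vL₁ vL₂ : ℝ, 0 < vL₁ → vL₁ < vL₂ → 2 * vL₂ < vH →
      1 - Real.sqrt ((vH - 2*vL₁)/(vH - vL₁)) < 1 - Real.sqrt ((vH - 2*vL₂)/(vH - vL₂))) := by
  constructor
  · intro vL vH₁ vH₂ h0 h1 h2
    have d1 : (0:ℝ) < vH₁ - vL := by linarith
    have d2 : (0:ℝ) < vH₂ - vL := by linarith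
    have hlt : (vH₁ - 2*vL)/(vH₁ - vL) < (vH₂ - 2*vL)/(vH₂ - vL) := by
      rw [div_lt_div_iff₀ d1 d2]; nlinarith
    have hnn : (0:ℝ) ≤ (vH₁ - 2*vL)/(vH₁ - vL) := div_nonneg (by linarith) (by linarith)
    have := Real.sqrt_lt_sqrt hnn hlt
    linarith
  · intro vH vL₁ vL₂ h0 h1 h2
    have d1 : (0:ℝ) < vH - vL₁ := by linarith
    have d2 : (0:ℝ) < vH - vL₂ := by linarith
    have hlt : (vH - 2*vL₂)/(vH - vL₂) < (vH - 2*vL₁)/(vH - vL₁) := by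
      rw [div_lt_div_iff₀ d2 d1]; nlinarith
    have hnn : (0:ℝ) ≤ (vH - 2*vL₂)/(vH - vL₂) := div_nonneg (by linarith) (by linarith)
    have := Real.sqrt_lt_sqrt hnn hlt
    linarith
end

section
/- Let Π^ST be the strategic-learning revenue given piecewise by: 2v_L in Region I, v_H + v_L/2 in Region II, (3/4)v_H + (3/4)v_L + (1−l)²/(v_H − v_L) in Region III, (3/4)v_H + (7/8)v_L in Region IV, and v_H + (1/4)v_L in Region V; and Π^NO = max{v_H, 2v_L}·indicator structure (v_H if v_L < v_H/2, else 2v_L). Then Π^ST ≥ Π^NO in every region, and the ratio (Π^ST − Π^NO)/Π^NO is at most 1/4 over all valid parameters, with maximum 1/4 attained when v_H = 2v_L ≤ 4(1−l). -/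
/-- The strategic-learning revenue `Π^ST` (given piecewise over the five PBE
regions) is at least the no-learning revenue `Π^NO`, the relative gain is at most `1/4`,
and the maximum `1/4` is attained when `vH = 2 vL ≤ 4(1−l)`. -/
theorem stmt11 (vL vH l : ℝ) (h0 : 0 < vL) (h1 : vL < vH) (hl0 : 0 < l) (hl1 : l < 1) :
    let PiST : ℝ :=
      if 2*vH/3 ≤ vL then 2*vL
      else if vH - vL ≤ 2*(1-l) then vH + vL/2
      else if vL*(vH-vL) ≤ 8*(1-l)^2 ∧ (vH-vL)*(vH-2*vL) ≤ 4*(1-l)^2 then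
        (3/4)*vH + (3/4)*vL + (1-l)^2/(vH-vL)
      else if 2*vH/5 ≤ vL then (3/4)*vH + (7/8)*vL
      else vH + (1/4)*vL
    let PiNO : ℝ := if vL < vH/2 then vH else 2*vL
    PiNO ≤ PiST ∧ (PiST - PiNO)/PiNO ≤ 1/4 ∧
    (vH = 2*vL ∧ vH ≤ 4*(1-l) → (PiST - PiNO)/PiNO = 1/4) := by
  intro PiST PiNO
  have hv : 0 < vH := lt_trans h0 h1
  have hll : 0 < 1 - l := by linarith
  simp only [PiST, PiNO]
  split_ifs with h1a h2a h3a h4a h5a h6a h7a h8a h9a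
  -- goal 1: vL < vH/2 and 2vH/3 ≤ vL: contradiction
  · exact absurd h2a (by linarith)
  -- goal 2: region II, PiNO = vH
  · refine ⟨by linarith, ?_, ?_⟩
    · rw [div_le_iff₀ hv]; linarith
    · rintro ⟨he1, he2⟩; linarith
  -- goal 3: region III, PiNO = vH
  · have hd : 0 < vH - vL := by linarith
    have hlb : (vH - 3*vL)/4 ≤ (1-l)^2/(vH-vL) := by
      rw [div_le_div_iff₀ (by norm_num) hd]
      nlinarith [h4a.2, mul_pos h0 hd]
    have hub : (1-l)^2/(vH-vL) ≤ (vH-vL)/4 := by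
      rw [div_le_div_iff₀ hd (by norm_num)]
      nlinarith [h3a]
    refine ⟨by linarith, ?_, ?_⟩
    · rw [div_le_iff₀ hv]; linarith
    · rintro ⟨he1, he2⟩; linarith
  -- goal 4: region IV, PiNO = vH
  · refine ⟨by linarith, ?_, ?_⟩
    · rw [div_le_iff₀ hv]; linarith
    · rintro ⟨he1, he2⟩; linarith
  -- goal 5: region V, PiNO = vH
  · refine ⟨by linarith, ?_, ?_⟩
    · rw [div_le_iff₀ hv]; linarith
    · rintro ⟨he1, he2⟩; linarith
  -- goal 6: region I, PiNO = 2vL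
  · refine ⟨le_refl _, ?_, ?_⟩
    · rw [div_le_iff₀ (by linarith : (0:ℝ) < 2*vL)]; linarith
    · rintro ⟨he1, he2⟩; linarith
  -- goal 7: region II, PiNO = 2vL  (equality case)
  · refine ⟨by linarith, ?_, ?_⟩
    · rw [div_le_iff₀ (by linarith : (0:ℝ) < 2*vL)]; linarith
    · rintro ⟨he1, he2⟩
      rw [div_eq_iff (by linarith : (2:ℝ)*vL ≠ 0)]; linarith
  -- goal 8: region III, PiNO = 2vL
  · have hd : 0 < vH - vL := by linarith
    have hlb : (5*vL - 3*vH)/4 ≤ (1-l)^2/(vH-vL) := by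
      rw [div_le_div_iff₀ (by norm_num) hd]
      nlinarith [h8a.1, mul_pos (show (0:ℝ) < 6*vH - 9*vL by linarith) hd]
    have hub : (1-l)^2/(vH-vL) ≤ (vH-vL)/4 := by
      rw [div_le_div_iff₀ hd (by norm_num)]
      nlinarith [h7a]
    refine ⟨by linarith, ?_, ?_⟩
    · rw [div_le_iff₀ (by linarith : (0:ℝ) < 2*vL)]; linarith
    · rintro ⟨he1, he2⟩; linarith
  -- goal 9: region IV, PiNO = 2vL
  · refine ⟨by linarith, ?_, ?_⟩
    · rw [div_le_iff₀ (by linarith : (0:ℝ) < 2*vL)]; linarith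
    · rintro ⟨he1, he2⟩; linarith
  -- goal 10: region V with vL ≥ vH/2: contradiction
  · exact absurd h9a (by push_neg; linarith)
end

section
/- In Region III, the relative revenue loss from buyer awareness L = ((v_H − v_L)² − 4(1−l)²)/((v_H − v_L)(4v_H + 2v_L)) is nonnegative, and over Region III together with Regions IV and V (where the losses are (2v_H − 3v_L)/(8v_H + 4v_L) and v_L/(4v_H + 2v_L) respectively), the loss never exceeds 1/12, with maximum attained at v_L/v_H = 2/5 and v_H − v_L ≥ 6(1−l)/√3. -/
set_option maxHeartbeats 1000000 in
open Classical in
/-- The relative revenue loss from buyer awareness is nonnegative in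
Region III, never exceeds `1/12` over Regions III–V, with maximum attained at
`vL/vH = 2/5` and `vH − vL ≥ 6(1−l)/√3`. -/
theorem stmt12 (vL vH l : ℝ) (h0 : 0 < vL) (h1 : vL < vH) (hl0 : 0 < l) (hl1 : l < 1) :
    let d : ℝ := vH - vL
    let Reg3 : Prop := 2*(1-l) < d ∧ vL*d ≤ 8*(1-l)^2 ∧ d*(vH-2*vL) ≤ 4*(1-l)^2
    let Reg4 : Prop := 2*vH/5 ≤ vL ∧ 8*(1-l)^2 < vL*d
    let Reg5 : Prop := vL < 2*vH/5 ∧ 4*(1-l)^2 < d*(vH-2*vL)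
    let L : ℝ := if Reg3 then (d^2 - 4*(1-l)^2)/(d*(4*vH+2*vL))
      else if Reg4 then (2*vH-3*vL)/(8*vH+4*vL) else vL/(4*vH+2*vL)
    (Reg3 → 0 ≤ (d^2 - 4*(1-l)^2)/(d*(4*vH+2*vL))) ∧
    ((Reg3 ∨ Reg4 ∨ Reg5) → L ≤ 1/12) ∧
    (vL = 2*vH/5 ∧ 6*(1-l)/Real.sqrt 3 ≤ d → L = 1/12) := by
  intro d Reg3 Reg4 Reg5 L
  have hd' : d = vH - vL := rfl
  clear_value d
  have hd : 0 < d := by linarith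
  have hvH : 0 < vH := lt_trans h0 h1
  have hden : 0 < d*(4*vH+2*vL) := by positivity
  refine ⟨?_, ?_, ?_⟩
  · rintro ⟨ha, hb, hc⟩
    apply div_nonneg _ (le_of_lt hden)
    nlinarith
  · intro hreg
    simp only [L]
    split_ifs with hR3 hR4
    · obtain ⟨ha, hb, hc⟩ := hR3
      rw [div_le_iff₀ hden]
      have hcc : d*(d - vL) ≤ 4*(1-l)^2 := by nlinarith [hc]
      nlinarith [hcc]
    · obtain ⟨ha, hb⟩ := hR4
      rw [div_le_iff₀ (by linarith : (0:ℝ) < 8*vH+4*vL)]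
      linarith
    · have hR5 : Reg5 := by tauto
      rw [div_le_iff₀ (by linarith : (0:ℝ) < 4*vH+2*vL)]
      linarith [hR5.1]
  · rintro ⟨hv, hdineq⟩
    have hvLd : vL = 2*d/3 := by linarith
    have hsq : 12*(1-l)^2 ≤ d^2 := by
      have h3 : (0:ℝ) < Real.sqrt 3 := by positivity
      have h6 := (div_le_iff₀ h3).mp hdineq
      have hs : Real.sqrt 3 ^ 2 = 3 := Real.sq_sqrt (by norm_num)
      nlinarith [Real.sqrt_nonneg 3, hd.le, hl1]
    simp only [L]
    split_ifs with hR3 hR4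
    · obtain ⟨ha, hb, hc⟩ := hR3
      rw [hvLd] at hb
      have heq : 8*(1-l)^2 = 2/3*d^2 := by nlinarith [hb]
      rw [div_eq_iff (ne_of_gt hden)]
      nlinarith [heq]
    · rw [div_eq_iff (by linarith : (8*vH+4*vL) ≠ 0)]
      linarith
    · exfalso
      apply hR4
      constructor
      · linarith
      · by_contra hle
        push_neg at hle
        rw [hvLd] at hle
        have heq : 12*(1-l)^2 = d^2 := by nlinarith [hle]
        apply hR3
        have h2vL : vH - 2*vL = d/3 := by linarith
        refine ⟨by nlinarith [heq, sq_nonneg (d - 2*(1-l)), hd, hl1], by rw [hvLd]; nlinarith [heq], ?_⟩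
        rw [h2vL]
        nlinarith [heq]
end

section
/- For N ≥ 1 buyers: the N-buyer undisclosed-learning revenue Π¹_N (equal to N·v_H/2 + (N−1)·v_L/2 if v_L/v_H < N/(N+1), and N·v_L otherwise) is at least the N-buyer no-learning revenue Π⁰_N (equal to N·v_H/2 if v_L/v_H < 1/2, and N·v_L otherwise), and the relative gain (Π¹_N − Π⁰_N)/Π⁰_N is at most (N−1)/(2N), with maximum attained at v_L/v_H = 1/2. -/
/-- For `N ≥ 1` buyers, the undisclosed-learning revenue `Π¹_N` is at least
the no-learning revenue `Π⁰_N`, and the relative gain is at most `(N−1)/(2N)`, with maximum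
attained at `vL/vH = 1/2`. -/
theorem stmt13 (N : ℕ) (hN : 1 ≤ N) (vL vH : ℝ) (h0 : 0 < vL) (h1 : vL < vH) :
    let Pi0 : ℝ := if vL / vH < 1/2 then (N:ℝ) * vH / 2 else (N:ℝ) * vL
    let Pi1 : ℝ := if vL / vH < (N:ℝ) / ((N:ℝ) + 1)
      then (N:ℝ) * vH / 2 + ((N:ℝ) - 1) * vL / 2 else (N:ℝ) * vL
    Pi0 ≤ Pi1 ∧ (Pi1 - Pi0)/Pi0 ≤ ((N:ℝ) - 1)/(2*(N:ℝ)) ∧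
    (vL / vH = 1/2 → (Pi1 - Pi0)/Pi0 = ((N:ℝ) - 1)/(2*(N:ℝ))) := by
  have hvH : (0:ℝ) < vH := h0.trans h1
  have hN1 : (1:ℝ) ≤ (N:ℝ) := by exact_mod_cast hN
  have hNpos : (0:ℝ) < (N:ℝ) := lt_of_lt_of_le one_pos hN1
  have hc1 : vL / vH < 1/2 ↔ 2 * vL < vH := by
    rw [div_lt_iff₀ hvH]; constructor <;> intro h <;> linarith
  have hc2 : vL / vH < (N:ℝ) / ((N:ℝ) + 1) ↔ ((N:ℝ)+1) * vL < (N:ℝ) * vH := by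
    rw [div_lt_div_iff₀ hvH (by linarith)]; constructor <;> intro h <;> nlinarith
  have heq : vL / vH = 1/2 ↔ 2 * vL = vH := by
    rw [div_eq_iff hvH.ne']; constructor <;> intro h <;> linarith
  intro Pi0 Pi1
  simp only [Pi0, Pi1]
  split_ifs with h2 h3 h4
  · -- 2vL < vH, (N+1)vL < N vH
    rw [hc1] at h2
    refine ⟨by nlinarith, ?_, ?_⟩
    · rw [div_le_div_iff₀ (by positivity) (by positivity)]
      nlinarith [mul_nonneg (mul_nonneg (sub_nonneg.2 hN1) hNpos.le) (by linarith : (0:ℝ) ≤ vH - 2*vL)]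
    · intro h; rw [heq] at h; linarith
  · -- 2vL < vH but not (N+1)vL < N vH : contradiction
    rw [hc1] at h2; rw [hc2] at h3; push_neg at h3
    nlinarith
  · -- vH ≤ 2vL, (N+1)vL < N vH
    rw [hc1] at h2; push_neg at h2; rw [hc2] at h4
    refine ⟨by nlinarith, ?_, ?_⟩
    · rw [div_le_div_iff₀ (by positivity) (by positivity)]
      nlinarith [mul_nonneg hNpos.le (by linarith : (0:ℝ) ≤ 2*vL - vH)]
    · intro h; rw [heq] at h
      rw [div_eq_div_iff (by positivity) (by positivity), ← h]
      ring
  · -- both else: ratio 0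
    rw [hc1] at h2; push_neg at h2; rw [hc2] at h4; push_neg at h4
    refine ⟨le_refl _, ?_, ?_⟩
    · simp only [sub_self, zero_div]
      exact div_nonneg (by linarith) (by positivity)
    · intro h; rw [heq] at h
      -- here N vH ≤ (N+1) vL and vH = 2vL ⇒ 2N vL ≤ (N+1)vL ⇒ N ≤ 1 ⇒ N = 1
      have : (N:ℝ) ≤ 1 := by nlinarith
      have : (N:ℝ) = 1 := le_antisymm this hN1
      rw [this]; simp
end

section
/- With one known buyer connected to N unknown buyers (no manipulation), the seller's expected revenue from the N unknown buyers is N·(v_L + v_H)/2, and the relative improvement over the undisclosed-learning revenue without the known buyer (which equals N·v_H/2 + (N−1)·v_L/2 if v_L/v_H < N/(N+1), and N·v_L otherwise) is always positive and at most 1/(2N), with maximum attained at v_L/v_H = N/(N+1). -/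
/-- With one known buyer connected to `N` unknown buyers, the seller's
expected revenue is `N(vL + vH)/2`; the relative improvement over the undisclosed-learning
revenue without the known buyer is always positive and at most `1/(2N)`, with maximum
attained at `vL/vH = N/(N+1)`. -/
theorem stmt14 (N : ℕ) (hN : 1 ≤ N) (vL vH : ℝ) (h0 : 0 < vL) (h1 : vL < vH) :
    let Pi1 : ℝ := if vL / vH < (N:ℝ) / ((N:ℝ) + 1)
      then (N:ℝ) * vH / 2 + ((N:ℝ) - 1) * vL / 2 else (N:ℝ) * vL
    let PiK : ℝ := (N:ℝ) * (vL + vH) / 2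
    0 < (PiK - Pi1)/Pi1 ∧ (PiK - Pi1)/Pi1 ≤ 1/(2*(N:ℝ)) ∧
    (vL / vH = (N:ℝ)/((N:ℝ)+1) → (PiK - Pi1)/Pi1 = 1/(2*(N:ℝ))) := by
  intro Pi1 PiK
  have hn : (1:ℝ) ≤ (N:ℝ) := by exact_mod_cast hN
  have hn0 : (0:ℝ) < (N:ℝ) := lt_of_lt_of_le one_pos hn
  have hvH : (0:ℝ) < vH := lt_trans h0 h1
  have hdiv : vL / vH < (N:ℝ) / ((N:ℝ) + 1) ↔ ((N:ℝ)+1) * vL < (N:ℝ) * vH := by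
    rw [div_lt_div_iff₀ hvH (by linarith : (0:ℝ) < (N:ℝ)+1)]
    constructor <;> intro h <;> nlinarith
  by_cases hc : vL / vH < (N:ℝ) / ((N:ℝ) + 1)
  · have hlt : ((N:ℝ)+1) * vL < (N:ℝ) * vH := hdiv.mp hc
    have hPi1 : Pi1 = (N:ℝ) * vH / 2 + ((N:ℝ) - 1) * vL / 2 := if_pos hc
    have hPi1pos : 0 < Pi1 := by rw [hPi1]; nlinarith
    have hdiff : PiK - Pi1 = vL / 2 := by
      show (N:ℝ) * (vL + vH) / 2 - Pi1 = vL / 2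
      rw [hPi1]; ring
    refine ⟨by rw [hdiff]; positivity, ?_, ?_⟩
    · rw [hdiff, hPi1, div_le_div_iff₀ (by nlinarith) (by positivity)]
      nlinarith
    · intro heq
      exfalso
      rw [heq] at hc
      exact lt_irrefl _ hc
  · have hge : (N:ℝ) * vH ≤ ((N:ℝ)+1) * vL := by
      by_contra h
      exact hc (hdiv.mpr (by linarith))
    have hPi1 : Pi1 = (N:ℝ) * vL := if_neg hc
    have hdiff : PiK - Pi1 = (N:ℝ) * (vH - vL) / 2 := by
      show (N:ℝ) * (vL + vH) / 2 - Pi1 = (N:ℝ) * (vH - vL) / 2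
      rw [hPi1]; ring
    have hPi1pos : 0 < Pi1 := by rw [hPi1]; positivity
    refine ⟨by rw [hdiff]; exact div_pos (by nlinarith) hPi1pos, ?_, ?_⟩
    · rw [hdiff, hPi1, div_le_div_iff₀ (by positivity) (by positivity)]
      nlinarith
    · intro heq
      have heq' : ((N:ℝ)+1) * vL = (N:ℝ) * vH := by
        have := (div_eq_div_iff hvH.ne' (by positivity : ((N:ℝ)+1) ≠ 0)).mp heq
        nlinarith
      rw [hdiff, hPi1, div_eq_div_iff (by positivity : ((N:ℝ)*vL) ≠ 0) (by positivity : (2*(N:ℝ)) ≠ 0)]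
      nlinarith
end

section
/- Comparing the three-buyer revenue with a known low-preference buyer, Π_{i,j} = v_L + v_H, to the two-buyer strategic-learning revenue Π^ST (piecewise over Regions I–V), the improvement ratio (Π_{i,j} − Π^ST)/Π^ST is positive everywhere and bounded above by 3/11, with the maximum attained when v_L/v_H = 2/5 and v_H ≥ 10(1−l)/√3. -/
private lemma sqrt_cond {vH l : ℝ} (hl1 : l < 1) (h : 10*(1-l)/Real.sqrt 3 ≤ vH) :
    100*(1-l)^2 ≤ 3*vH^2 := by
  have hs : (0:ℝ) < Real.sqrt 3 := Real.sqrt_pos.mpr (by norm_num)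
  rw [div_le_iff₀ hs] at h
  have h10 : (0:ℝ) ≤ 10*(1-l) := by linarith
  have := mul_self_le_mul_self h10 h
  have hsq : Real.sqrt 3 * Real.sqrt 3 = 3 := Real.mul_self_sqrt (by norm_num)
  nlinarith [this, hsq]

/-- With a known low-preference buyer, the three-buyer revenue
`Π_{i,j} = vL + vH` improves on the two-buyer strategic-learning revenue `Π^ST`
(piecewise over Regions I–V) by a positive ratio that is at most `3/11`, with maximum
attained when `vL/vH = 2/5` and `vH ≥ 10(1−l)/√3`. -/
theorem stmt15 (vL vH l : ℝ) (h0 : 0 < vL) (h1 : vL < vH) (hl0 : 0 < l) (hl1 : l < 1) :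
    let PiST : ℝ :=
      if 2*vH/3 ≤ vL then 2*vL
      else if vH - vL ≤ 2*(1-l) then vH + vL/2
      else if vL*(vH-vL) ≤ 8*(1-l)^2 ∧ (vH-vL)*(vH-2*vL) ≤ 4*(1-l)^2 then
        (3/4)*vH + (3/4)*vL + (1-l)^2/(vH-vL)
      else if 2*vH/5 ≤ vL then (3/4)*vH + (7/8)*vL
      else vH + (1/4)*vL
    let PiIJ : ℝ := vL + vH
    0 < (PiIJ - PiST)/PiST ∧ (PiIJ - PiST)/PiST ≤ 3/11 ∧
    (vL = 2*vH/5 ∧ 10*(1-l)/Real.sqrt 3 ≤ vH → (PiIJ - PiST)/PiST = 3/11) := by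
  have hml : (0:ℝ) < 1 - l := by linarith
  intro PiST PiIJ
  have h11 : (0:ℝ) < 11 := by norm_num
  show 0 < (PiIJ - PiST)/PiST ∧ (PiIJ - PiST)/PiST ≤ 3/11 ∧ _
  unfold PiST PiIJ
  split_ifs with hA hB hC hD
  · -- Region I
    refine ⟨div_pos (by linarith) (by linarith), ?_, ?_⟩
    · rw [div_le_div_iff₀ (by linarith) h11]; linarith
    · rintro ⟨he, _⟩; exfalso; rw [he] at hA; linarith
  · -- Region II
    push_neg at hA
    refine ⟨div_pos (by linarith) (by linarith), ?_, ?_⟩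
    · rw [div_le_div_iff₀ (by linarith) h11]; linarith
    · rintro ⟨he, hv⟩; exfalso
      have hsc := sqrt_cond hl1 hv
      rw [he] at hB; nlinarith
  · -- Region III
    push_neg at hA hB
    obtain ⟨hC1, hC2⟩ := hC
    have hd : (0:ℝ) < vH - vL := by linarith
    have hcd : (1-l)^2/(vH-vL) * (vH-vL) = (1-l)^2 := div_mul_cancel₀ _ (ne_of_gt hd)
    have hel : (1-l)^2/(vH-vL) < (1/4)*(vH+vL) := by
      rw [div_lt_iff₀ hd]; nlinarith
    have heg : (vH+vL)/28 ≤ (1-l)^2/(vH-vL) := by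
      rw [div_le_div_iff₀ (by norm_num) hd]; nlinarith
    have hS : (0:ℝ) < (3/4)*vH + (3/4)*vL + (1-l)^2/(vH-vL) := by
      have := div_nonneg (sq_nonneg (1-l)) (le_of_lt hd); linarith
    refine ⟨div_pos (by linarith) hS, ?_, ?_⟩
    · rw [div_le_div_iff₀ hS h11]; linarith
    · rintro ⟨he, hv⟩
      have hsc := sqrt_cond hl1 hv
      have heq : 3*vH^2 = 100*(1-l)^2 := by rw [he] at hC1; nlinarith
      have hev : (1-l)^2/(vH-vL) = vH/20 := by
        rw [he]; rw [div_eq_iff (by intro hc; nlinarith)]; nlinarith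
      have hden : (0:ℝ) < 3/4*vH + 3/4*vL + vH/20 := by linarith
      rw [hev, div_eq_div_iff (ne_of_gt hden) (by norm_num : (11:ℝ) ≠ 0), he]; ring
  · -- Region IV
    push_neg at hA hB hC
    refine ⟨div_pos (by linarith) (by linarith), ?_, ?_⟩
    · rw [div_le_div_iff₀ (by linarith) h11]; linarith
    · rintro ⟨he, _⟩
      have hden : (0:ℝ) < 3/4*vH + 7/8*vL := by linarith
      rw [div_eq_div_iff (ne_of_gt hden) (by norm_num : (11:ℝ) ≠ 0), he]; ring
  · -- Region V
    push_neg at hA hB hC hD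
    refine ⟨div_pos (by linarith) (by linarith), ?_, ?_⟩
    · rw [div_le_div_iff₀ (by linarith) h11]; linarith
    · rintro ⟨he, _⟩; exfalso; rw [he] at hD; linarith
end

section
/- For any v̄ > 0 and 0 < l < 1 with v̄ > 8(1−l), the cubic equation 8v̄(1−ρ)³ − 3v̄(1−ρ) + 32l − 32 = 0 has a solution ρ ∈ (1 − √3/2, 1 − √(3/8)) if and only if 1 − l < 3√3·v̄/64, and when a solution exists in that interval it is unique. -/
set_option maxHeartbeats 1000000 in
/-- For `v̄ > 8(1−l)`, the cubic `8v̄(1−ρ)³ − 3v̄(1−ρ) + 32l − 32 = 0` has a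
solution `ρ ∈ (1 − √3/2, 1 − √(3/8))` iff `1 − l < 3√3·v̄/64`, and any solution in that
interval is unique. -/
theorem stmt17 (vbar l : ℝ) (hv : 0 < vbar) (hl0 : 0 < l) (hl1 : l < 1)
    (hv2 : 8*(1-l) < vbar) :
    ((∃ ρ ∈ Set.Ioo (1 - Real.sqrt 3 / 2) (1 - Real.sqrt (3/8)),
        8*vbar*(1-ρ)^3 - 3*vbar*(1-ρ) + 32*l - 32 = 0) ↔
      1 - l < 3*Real.sqrt 3*vbar/64) ∧
    (∀ ρ₁ ∈ Set.Ioo (1 - Real.sqrt 3 / 2) (1 - Real.sqrt (3/8)),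
     ∀ ρ₂ ∈ Set.Ioo (1 - Real.sqrt 3 / 2) (1 - Real.sqrt (3/8)),
      8*vbar*(1-ρ₁)^3 - 3*vbar*(1-ρ₁) + 32*l - 32 = 0 →
      8*vbar*(1-ρ₂)^3 - 3*vbar*(1-ρ₂) + 32*l - 32 = 0 → ρ₁ = ρ₂) := by
  set s3 := Real.sqrt 3 with hs3def
  set sa := Real.sqrt (3/8) with hsadef
  have hs3sq : s3^2 = 3 := Real.sq_sqrt (by norm_num)
  have hsasq : sa^2 = 3/8 := Real.sq_sqrt (by norm_num)
  have hs3pos : 0 < s3 := Real.sqrt_pos.mpr (by norm_num)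
  have hsapos : 0 < sa := Real.sqrt_pos.mpr (by norm_num)
  have hab : sa < s3/2 := by nlinarith [hs3sq, hsasq, hs3pos, hsapos]
  constructor
  · constructor
    · rintro ⟨ρ, ⟨h1, h2⟩, heq⟩
      set t := 1 - ρ with ht
      have ht1 : sa < t := by simp only [ht]; linarith
      have ht2 : t < s3/2 := by simp only [ht]; linarith
      have htsq : 3/8 < t^2 := by nlinarith
      have htpos : 0 < t := lt_trans hsapos ht1
      -- g(s3/2) > g(t) = 0
      have hb2 : (s3/2)^2 = 3/4 := by nlinarith [hs3sq]
      have hkey : 0 < vbar * ((s3/2 - t) * (8*((s3/2)^2 + (s3/2)*t + t^2) - 3)) := by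
        apply mul_pos hv
        apply mul_pos (by linarith)
        nlinarith [mul_pos htpos hs3pos]
      have hexp : 8*vbar*(s3/2)^3 - 3*vbar*(s3/2) + 32*l - 32 =
          (8*vbar*t^3 - 3*vbar*t + 32*l - 32) +
          vbar * ((s3/2 - t) * (8*((s3/2)^2 + s3/2*t + t^2) - 3)) := by ring
      have hgb : 8*vbar*(s3/2)^3 - 3*vbar*(s3/2) + 32*l - 32 > 0 := by
        rw [hexp, heq]; linarith
      have : (s3/2)^3 = 3*s3/8 := by nlinarith [hs3sq]
      nlinarith [hgb, this]
    · intro hcond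
      have hgb : (0:ℝ) < 8*vbar*(s3/2)^3 - 3*vbar*(s3/2) + 32*l - 32 := by
        have : (s3/2)^3 = 3*s3/8 := by nlinarith [hs3sq]
        nlinarith [hcond, this]
      have hga : 8*vbar*sa^3 - 3*vbar*sa + 32*l - 32 < 0 := by
        have : sa^3 = (3/8)*sa := by nlinarith [hsasq]
        rw [this]; ring_nf; linarith
      have hcont : ContinuousOn (fun t : ℝ => 8*vbar*t^3 - 3*vbar*t + 32*l - 32)
          (Set.Icc sa (s3/2)) := by fun_prop
      have hivt := intermediate_value_Ioo (le_of_lt hab) hcont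
      have h0mem : (0:ℝ) ∈ Set.Ioo (8*vbar*sa^3 - 3*vbar*sa + 32*l - 32)
          (8*vbar*(s3/2)^3 - 3*vbar*(s3/2) + 32*l - 32) := ⟨hga, hgb⟩
      obtain ⟨t, htmem, hteq⟩ := hivt h0mem
      obtain ⟨hta, htb⟩ := htmem
      refine ⟨1 - t, Set.mem_Ioo.mpr ⟨by linarith, by linarith⟩, ?_⟩
      have : (1 : ℝ) - (1 - t) = t := by ring
      rw [this]
      exact hteq
  · rintro ρ₁ ⟨h11, h12⟩ ρ₂ ⟨h21, h22⟩ heq1 heq2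
    set t₁ := 1 - ρ₁ with ht1
    set t₂ := 1 - ρ₂ with ht2
    have ht1a : sa < t₁ := by simp only [ht1]; linarith
    have ht2a : sa < t₂ := by simp only [ht2]; linarith
    have h1sq : 3/8 < t₁^2 := by nlinarith
    have h2sq : 3/8 < t₂^2 := by nlinarith
    have hpos1 : 0 < t₁ := lt_trans hsapos ht1a
    have hpos2 : 0 < t₂ := lt_trans hsapos ht2a
    have : t₁ = t₂ := by
      by_contra hne
      have hd : 8*vbar*(t₁^3 - t₂^3) - 3*vbar*(t₁ - t₂) = 0 := by linarith [heq1, heq2]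
      have hfac : (t₁ - t₂) * (vbar * (8*(t₁^2 + t₁*t₂ + t₂^2) - 3)) = 0 := by nlinarith [hd]
      have hpos : 0 < vbar * (8*(t₁^2 + t₁*t₂ + t₂^2) - 3) := by
        apply mul_pos hv
        nlinarith [mul_pos hpos1 hpos2]
      rcases mul_eq_zero.mp hfac with h | h
      · exact hne (by linarith [sub_eq_zero.mp h])
      · linarith
    linarith [this]
end
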